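/- Fix D ∈ ℕ and let X, Y : Ω → (Fin D → ℝ) be independent random vectors such that every coordinate X_i and Y_i is square-integrable. Then E[‖X − Y‖₂²] − ( Σ_i (E[X_i] − E[Y_i])² + Σ_i (√(Var(X_i)) − √(Var(Y_i)))² ) = 2 Σ_i √(Var(X_i))·√(Var(Y_i)), and in particular E[‖X − Y‖₂²] ≥ Σ_i (E[X_i] − E[Y_i])² + Σ_i (√(Var(X_i)) − √(Var(Y_i)))². -/

import Mathlib

/-! Independence kills the covariance, so coordinatewise
`E[(Xᵢ - Yᵢ)²] = (E Xᵢ - E Yᵢ)² + Var Xᵢ + Var Yᵢ`; the gap is then the identity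
`a + b = (√a - √b)² + 2 √a √b` for `a, b ≥ 0`. -/

open MeasureTheory ProbabilityTheory

namespace ProbabilityTheory

variable {Ω : Type*} [MeasurableSpace Ω] {P : Measure Ω} [IsProbabilityMeasure P]

theorem IndepFun.integral_sub_sq {X Y : Ω → ℝ} (hindep : IndepFun X Y P)
    (hX : MemLp X 2 P) (hY : MemLp Y 2 P) :
    ∫ ω, (X ω - Y ω) ^ 2 ∂P = (P[X] - P[Y]) ^ 2 + (variance X P + variance Y P) := by
  have hvar : variance (X - Y) P = variance X P + variance Y P := by
    rw [variance_sub hX hY, hindep.covariance_eq_zero hX hY]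
    ring
  have hmean : ∫ ω, (X ω - Y ω) ∂P = P[X] - P[Y] :=
    integral_sub (hX.integrable one_le_two) (hY.integrable one_le_two)
  have hdecomp : variance (X - Y) P = ∫ ω, (X ω - Y ω) ^ 2 ∂P - (∫ ω, (X ω - Y ω) ∂P) ^ 2 :=
    variance_eq_sub (hX.sub hY)
  rw [hvar, hmean] at hdecomp
  linarith

theorem IndepFun.integral_sum_sub_sq {ι : Type*} [Fintype ι] {X Y : Ω → ι → ℝ}
    (hindep : IndepFun X Y P) (hX : ∀ i, MemLp (fun ω => X ω i) 2 P)
    (hY : ∀ i, MemLp (fun ω => Y ω i) 2 P) :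
    ∫ ω, (∑ i, (X ω i - Y ω i) ^ 2) ∂P
      = ∑ i, ((∫ ω, X ω i ∂P - ∫ ω, Y ω i ∂P) ^ 2
          + (variance (fun ω => X ω i) P + variance (fun ω => Y ω i) P)) := by
  rw [integral_finsetSum (f := fun i ω => (X ω i - Y ω i) ^ 2) Finset.univ
    fun i _ => ((hX i).sub (hY i)).integrable_sq]
  refine Finset.sum_congr rfl fun i _ => ?_
  exact (hindep.comp (measurable_pi_apply i) (measurable_pi_apply i)).integral_sub_sq
    (hX i) (hY i)

end ProbabilityTheory

theorem Real.sqrt_sub_sqrt_sq {a b : ℝ} (ha : 0 ≤ a) (hb : 0 ≤ b) :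
    (√a - √b) ^ 2 = a + b - 2 * (√a * √b) := by
  rw [sub_sq, Real.sq_sqrt ha, Real.sq_sqrt hb]
  ring

theorem csd_sub_wasserstein_gap_general
    {Ω : Type*} [MeasurableSpace Ω] (P : Measure Ω) [IsProbabilityMeasure P]
    (D : ℕ) (X Y : Ω → (Fin D → ℝ))
    (hindep : IndepFun X Y P)
    (hX2 : ∀ i, MemLp (fun ω => X ω i) 2 P)
    (hY2 : ∀ i, MemLp (fun ω => Y ω i) 2 P) :
    ((∫ ω, (∑ i, (X ω i - Y ω i) ^ 2) ∂P)
      - ((∑ i, ((∫ ω, X ω i ∂P) - ∫ ω, Y ω i ∂P) ^ 2)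
          + ∑ i, (Real.sqrt (variance (fun ω => X ω i) P)
                    - Real.sqrt (variance (fun ω => Y ω i) P)) ^ 2)
      = 2 * ∑ i, Real.sqrt (variance (fun ω => X ω i) P)
                  * Real.sqrt (variance (fun ω => Y ω i) P))
    ∧ (∫ ω, (∑ i, (X ω i - Y ω i) ^ 2) ∂P
        ≥ (∑ i, ((∫ ω, X ω i ∂P) - ∫ ω, Y ω i ∂P) ^ 2)
          + ∑ i, (Real.sqrt (variance (fun ω => X ω i) P)
                    - Real.sqrt (variance (fun ω => Y ω i) P)) ^ 2) := by
  have hgap : (∫ ω, (∑ i, (X ω i - Y ω i) ^ 2) ∂P)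
      - ((∑ i, ((∫ ω, X ω i ∂P) - ∫ ω, Y ω i ∂P) ^ 2)
          + ∑ i, (Real.sqrt (variance (fun ω => X ω i) P)
                    - Real.sqrt (variance (fun ω => Y ω i) P)) ^ 2)
      = 2 * ∑ i, Real.sqrt (variance (fun ω => X ω i) P)
                  * Real.sqrt (variance (fun ω => Y ω i) P) := by
    simp only [hindep.integral_sum_sub_sq hX2 hY2,
      Real.sqrt_sub_sqrt_sq (variance_nonneg _ _) (variance_nonneg _ _), Finset.mul_sum,
      ← Finset.sum_add_distrib, ← Finset.sum_sub_distrib]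
    exact Finset.sum_congr rfl fun i _ => by ring
  have hcross : 0 ≤ ∑ i, Real.sqrt (variance (fun ω => X ω i) P)
      * Real.sqrt (variance (fun ω => Y ω i) P) :=
    Finset.sum_nonneg fun i _ => mul_nonneg (Real.sqrt_nonneg _) (Real.sqrt_nonneg _)
  exact ⟨hgap, by linarith⟩

/-- **Gap between the CSD and the Gaussian Wasserstein closed form.** For independent
random vectors `X, Y` with square-integrable coordinates, the CSD `E[‖X − Y‖₂²]`
exceeds `‖E X − E Y‖₂² + Σᵢ (√Var(Xᵢ) − √Var(Yᵢ))²` by exactly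
`2 Σᵢ √Var(Xᵢ)·√Var(Yᵢ)`; in particular the CSD dominates the Wasserstein form. -/
theorem csd_sub_wasserstein_gap
    {Ω : Type*} [MeasurableSpace Ω] (P : Measure Ω) [IsProbabilityMeasure P]
    (D : ℕ) (X Y : Ω → (Fin D → ℝ)) (hX : Measurable X) (hY : Measurable Y)
    (hindep : IndepFun X Y P)
    (hX2 : ∀ i, MemLp (fun ω => X ω i) 2 P)
    (hY2 : ∀ i, MemLp (fun ω => Y ω i) 2 P) :
    ((∫ ω, (∑ i, (X ω i - Y ω i) ^ 2) ∂P)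
      - ((∑ i, ((∫ ω, X ω i ∂P) - ∫ ω, Y ω i ∂P) ^ 2)
          + ∑ i, (Real.sqrt (variance (fun ω => X ω i) P)
                    - Real.sqrt (variance (fun ω => Y ω i) P)) ^ 2)
      = 2 * ∑ i, Real.sqrt (variance (fun ω => X ω i) P)
                  * Real.sqrt (variance (fun ω => Y ω i) P))
    ∧ (∫ ω, (∑ i, (X ω i - Y ω i) ^ 2) ∂P
        ≥ (∑ i, ((∫ ω, X ω i ∂P) - ∫ ω, Y ω i ∂P) ^ 2)
          + ∑ i, (Real.sqrt (variance (fun ω => X ω i) P)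
                    - Real.sqrt (variance (fun ω => Y ω i) P)) ^ 2) :=
  csd_sub_wasserstein_gap_general P D X Y hindep hX2 hY2
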